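/- arXiv:2301.13722 — 7 statements merged into one kernel-verified Lean document; each statement's English description precedes it below -/
import Mathlib

section
/- Let A, B, C, N₁, …, N_d be real matrices of sizes n×n, n×m, p×n, n×n respectively, K = (k_ij) a positive semidefinite symmetric real d×d matrix, f : ℝⁿ → ℝⁿ, and c₁, c₂ ∈ ℝ. Suppose there exists a symmetric positive definite X ∈ ℝ^{n×n} such that (A+c₁I)ᵀX + X(A+c₁I) + Σ_{i,j=1}^d k_ij Nᵢᵀ X N_j is negative definite and ⟨x, X f(x)⟩ ≤ c₂ · xᵀXx for all x ∈ ℝⁿ. Then there exist symmetric positive definite P, Q ∈ ℝ^{n×n} such that: (A+c₁I)ᵀP⁻¹ + P⁻¹(A+c₁I) + Σ_{i,j} k_ij Nᵢᵀ P⁻¹ N_j ⪯ −P⁻¹BBᵀP⁻¹; ⟨x, P⁻¹ f(x)⟩ ≤ c₂ · xᵀP⁻¹x for all x; (A+c₁I)ᵀQ + Q(A+c₁I) + Σ_{i,j} k_ij Nᵢᵀ Q N_j ⪯ −CᵀC; and ⟨x, Q f(x)⟩ ≤ c₂ · xᵀQx for all x. -/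
open Matrix


lemma quad_bound {n : ℕ} (T : Matrix (Fin n) (Fin n) ℝ) (y : Fin n → ℝ) :
    y ⬝ᵥ (T *ᵥ y) ≤ (∑ i, ∑ j, |T i j|) * (y ⬝ᵥ y) := by
  have hsq : ∀ i, (y i)^2 ≤ y ⬝ᵥ y := by
    intro i
    simpa [dotProduct, sq] using
      Finset.single_le_sum (f := fun k => y k * y k)
        (fun k _ => mul_self_nonneg _) (Finset.mem_univ i)
  have hterm : ∀ i j, y i * (T i j * y j) ≤ |T i j| * (y ⬝ᵥ y) := by
    intro i j
    have h1 := hsq i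
    have h2 := hsq j
    have habs : y i * (T i j * y j) ≤ |T i j| * (|y i| * |y j|) := by
      calc y i * (T i j * y j) ≤ |y i * (T i j * y j)| := le_abs_self _
        _ = |T i j| * (|y i| * |y j|) := by rw [abs_mul, abs_mul]; ring
    have hprod : |y i| * |y j| ≤ y ⬝ᵥ y := by
      nlinarith [abs_nonneg (y i), abs_nonneg (y j), sq_abs (y i), sq_abs (y j)]
    calc y i * (T i j * y j) ≤ |T i j| * (|y i| * |y j|) := habs
      _ ≤ |T i j| * (y ⬝ᵥ y) := by
          exact mul_le_mul_of_nonneg_left hprod (abs_nonneg _)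
  calc y ⬝ᵥ (T *ᵥ y) = ∑ i, ∑ j, y i * (T i j * y j) := by
        simp [dotProduct, mulVec, Finset.mul_sum]
    _ ≤ ∑ i, ∑ j, |T i j| * (y ⬝ᵥ y) :=
        Finset.sum_le_sum fun i _ => Finset.sum_le_sum fun j _ => hterm i j
    _ = (∑ i, ∑ j, |T i j|) * (y ⬝ᵥ y) := by rw [Finset.sum_mul]; simp [Finset.sum_mul]

open scoped MatrixOrder in
lemma key_eps {n : ℕ} {M S : Matrix (Fin n) (Fin n) ℝ} (hM : M.PosDef) (hS : S.IsHermitian) :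
    ∃ ε : ℝ, 0 < ε ∧ (M - ε • S).PosSemidef := by
  set R := CFC.sqrt M with hRdef
  have hR : R.PosSemidef := nonneg_iff_posSemidef.mp (CFC.sqrt_nonneg M)
  have hRR : R * R = M := CFC.sqrt_mul_sqrt_self M (nonneg_iff_posSemidef.mpr hM.posSemidef)
  have hRsym : Rᵀ = R := by
    have := hR.isHermitian
    rwa [IsHermitian, conjTranspose_eq_transpose_of_trivial] at this
  have hdet : IsUnit R.det := by
    have hMdet : (0:ℝ) < M.det := hM.det_pos
    have : R.det * R.det = M.det := by rw [← det_mul, hRR]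
    have hne : R.det ≠ 0 := by
      intro h; rw [h, mul_zero] at this; exact hMdet.ne' this.symm
    exact hne.isUnit
  have hRinv_sym : (R⁻¹)ᵀ = R⁻¹ := by rw [transpose_nonsing_inv, hRsym]
  clear_value R
  set T := R⁻¹ * S * R⁻¹ with hTdef
  set c := ∑ i, ∑ j, |T i j| with hcdef
  have hc : 0 ≤ c := Finset.sum_nonneg fun i _ => Finset.sum_nonneg fun j _ => abs_nonneg _
  clear_value T c
  refine ⟨(c+1)⁻¹, by positivity, .of_dotProduct_mulVec_nonneg ?_ ?_⟩
  · have hSsym : Sᵀ = S := by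
      have := hS; rwa [IsHermitian, conjTranspose_eq_transpose_of_trivial] at this
    have hMsym : Mᵀ = M := by
      have := hM.isHermitian
      rwa [IsHermitian, conjTranspose_eq_transpose_of_trivial] at this
    rw [IsHermitian, conjTranspose_eq_transpose_of_trivial]
    simp [transpose_sub, transpose_smul, hSsym, hMsym]
  · intro x
    set y := R *ᵥ x with hydef
    have hMx : x ⬝ᵥ (M *ᵥ x) = y ⬝ᵥ y := by
      rw [← hRR, ← mulVec_mulVec, dotProduct_mulVec, ← mulVec_transpose, hRsym]
    have hxy : R⁻¹ *ᵥ y = x := by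
      rw [hydef, mulVec_mulVec, nonsing_inv_mul _ hdet, one_mulVec]
    have hSx : x ⬝ᵥ (S *ᵥ x) = y ⬝ᵥ (T *ᵥ y) := by
      symm
      calc y ⬝ᵥ (T *ᵥ y) = y ⬝ᵥ (R⁻¹ *ᵥ ((S * R⁻¹) *ᵥ y)) := by
            rw [hTdef, Matrix.mul_assoc, ← mulVec_mulVec]
        _ = (R⁻¹ *ᵥ y) ⬝ᵥ ((S * R⁻¹) *ᵥ y) := by
            rw [dotProduct_mulVec, ← mulVec_transpose, hRinv_sym]
        _ = x ⬝ᵥ (S *ᵥ x) := by rw [hxy, ← mulVec_mulVec, hxy]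
    have hbound : y ⬝ᵥ (T *ᵥ y) ≤ c * (y ⬝ᵥ y) := by
      rw [hcdef]; exact quad_bound T y
    have hyy : 0 ≤ y ⬝ᵥ y := by
      simpa [dotProduct] using Finset.sum_nonneg fun k _ => mul_self_nonneg (y k)
    have : x ⬝ᵥ ((M - (c+1)⁻¹ • S) *ᵥ x)
        = x ⬝ᵥ (M *ᵥ x) - (c+1)⁻¹ * (x ⬝ᵥ (S *ᵥ x)) := by
      simp [sub_mulVec, smul_mulVec, dotProduct_sub, dotProduct_smul, smul_eq_mul]
    simp only [star_trivial]
    rw [this, hMx, hSx]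
    have h1 : (c+1)⁻¹ * (y ⬝ᵥ (T *ᵥ y)) ≤ (c+1)⁻¹ * (c * (y ⬝ᵥ y)) :=
      mul_le_mul_of_nonneg_left hbound (by positivity)
    have hinv : (0:ℝ) ≤ (c+1)⁻¹ := by positivity
    have hcc : (c+1) * (c+1)⁻¹ = 1 := mul_inv_cancel₀ (by positivity)
    have hec : (c+1)⁻¹ * c ≤ 1 := by nlinarith
    have h2 : ((c+1)⁻¹ * c) * (y ⬝ᵥ y) ≤ 1 * (y ⬝ᵥ y) :=
      mul_le_mul_of_nonneg_right hec hyy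
    nlinarith


lemma real_transpose_eq {n : ℕ} {X : Matrix (Fin n) (Fin n) ℝ} (hX : X.IsHermitian) :
    Xᵀ = X := by rwa [IsHermitian, conjTranspose_eq_transpose_of_trivial] at hX

lemma posdef_smul' {n : ℕ} {X : Matrix (Fin n) (Fin n) ℝ} (hX : X.PosDef)
    {a : ℝ} (ha : 0 < a) : (a • X).PosDef := by
  refine .of_dotProduct_mulVec_pos ?_ fun x hx => ?_
  · rw [IsHermitian, conjTranspose_smul, conjTranspose_eq_transpose_of_trivial,
      real_transpose_eq hX.isHermitian]
    simp
  · have := hX.dotProduct_mulVec_pos hx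
    simp only [smul_mulVec, dotProduct_smul, smul_eq_mul] at *
    positivity

lemma possemidef_smul' {n : ℕ} {X : Matrix (Fin n) (Fin n) ℝ} (hX : X.PosSemidef)
    {a : ℝ} (ha : 0 ≤ a) : (a • X).PosSemidef := by
  refine .of_dotProduct_mulVec_nonneg ?_ fun x => ?_
  · rw [IsHermitian, conjTranspose_smul, conjTranspose_eq_transpose_of_trivial,
      real_transpose_eq hX.isHermitian]
    simp
  · have := hX.dotProduct_mulVec_nonneg x
    simp only [smul_mulVec, dotProduct_smul, smul_eq_mul] at *
    positivity

/-- existence of global monotonicity Gramians `P, Q` under a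
shifted Lyapunov inequality and an `X`-weighted monotonicity condition. -/
theorem stmt_4 (n m p d : ℕ)
    (A : Matrix (Fin n) (Fin n) ℝ) (B : Matrix (Fin n) (Fin m) ℝ)
    (C : Matrix (Fin p) (Fin n) ℝ) (N : Fin d → Matrix (Fin n) (Fin n) ℝ)
    (K : Matrix (Fin d) (Fin d) ℝ) (hK : K.PosSemidef)
    (f : (Fin n → ℝ) → (Fin n → ℝ)) (c₁ c₂ : ℝ)
    (X : Matrix (Fin n) (Fin n) ℝ) (hX : X.PosDef)
    (hLyap : (-((A + c₁ • (1 : Matrix (Fin n) (Fin n) ℝ))ᵀ * X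
        + X * (A + c₁ • (1 : Matrix (Fin n) (Fin n) ℝ))
        + ∑ i, ∑ j, K i j • ((N i)ᵀ * X * N j))).PosDef)
    (hmono : ∀ x : Fin n → ℝ, x ⬝ᵥ (X *ᵥ f x) ≤ c₂ * (x ⬝ᵥ (X *ᵥ x))) :
    ∃ P Q : Matrix (Fin n) (Fin n) ℝ, P.PosDef ∧ Q.PosDef ∧
      ((-(P⁻¹ * B * Bᵀ * P⁻¹))
        - ((A + c₁ • (1 : Matrix (Fin n) (Fin n) ℝ))ᵀ * P⁻¹
          + P⁻¹ * (A + c₁ • (1 : Matrix (Fin n) (Fin n) ℝ))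
          + ∑ i, ∑ j, K i j • ((N i)ᵀ * P⁻¹ * N j))).PosSemidef ∧
      (∀ x : Fin n → ℝ, x ⬝ᵥ (P⁻¹ *ᵥ f x) ≤ c₂ * (x ⬝ᵥ (P⁻¹ *ᵥ x))) ∧
      ((-(Cᵀ * C))
        - ((A + c₁ • (1 : Matrix (Fin n) (Fin n) ℝ))ᵀ * Q
          + Q * (A + c₁ • (1 : Matrix (Fin n) (Fin n) ℝ))
          + ∑ i, ∑ j, K i j • ((N i)ᵀ * Q * N j))).PosSemidef ∧
      (∀ x : Fin n → ℝ, x ⬝ᵥ (Q *ᵥ f x) ≤ c₂ * (x ⬝ᵥ (Q *ᵥ x))) := by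
  set Ac := A + c₁ • (1 : Matrix (Fin n) (Fin n) ℝ) with hAc
  have hXsym : Xᵀ = X := real_transpose_eq hX.isHermitian
  set S₁ := X * B * Bᵀ * X with hS₁
  set S₂ := Cᵀ * C with hS₂
  have hS₁herm : S₁.IsHermitian := by
    rw [IsHermitian, conjTranspose_eq_transpose_of_trivial, hS₁]
    simp [transpose_mul, hXsym, Matrix.mul_assoc]
  have hS₂herm : S₂.IsHermitian := by
    rw [IsHermitian, conjTranspose_eq_transpose_of_trivial, hS₂]
    simp [transpose_mul]
  obtain ⟨ε, hε, hP0⟩ := key_eps hLyap hS₁herm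
  obtain ⟨δ, hδ, hQ0⟩ := key_eps hLyap hS₂herm
  have hεX : (ε • X).PosDef := posdef_smul' hX hε
  have hεu : IsUnit (ε • X).det := hεX.det_pos.ne'.isUnit
  refine ⟨(ε • X)⁻¹, δ⁻¹ • X, hεX.inv, posdef_smul' hX (inv_pos.mpr hδ), ?_, ?_, ?_, ?_⟩
  · rw [nonsing_inv_nonsing_inv _ hεu]
    have hsum : ∀ a : ℝ, ∑ i, ∑ j, K i j • ((N i)ᵀ * (a • X) * N j)
        = a • ∑ i, ∑ j, K i j • ((N i)ᵀ * X * N j) := by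
      intro a
      rw [Finset.smul_sum]
      refine Finset.sum_congr rfl fun i _ => ?_
      rw [Finset.smul_sum]
      refine Finset.sum_congr rfl fun j _ => ?_
      rw [Matrix.mul_smul, Matrix.smul_mul, smul_comm]
    have heq : (-((ε • X) * B * Bᵀ * (ε • X)))
        - (Acᵀ * (ε • X) + (ε • X) * Ac + ∑ i, ∑ j, K i j • ((N i)ᵀ * (ε • X) * N j))
        = ε • ((-(Acᵀ * X + X * Ac + ∑ i, ∑ j, K i j • ((N i)ᵀ * X * N j))) - ε • S₁) := by
      rw [hsum]
      simp only [Matrix.smul_mul, Matrix.mul_smul, smul_smul, hS₁]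
      module
    rw [heq]
    exact possemidef_smul' hP0 hε.le
  · rw [nonsing_inv_nonsing_inv _ hεu]
    intro x
    have := hmono x
    simp only [smul_mulVec, dotProduct_smul, smul_eq_mul]
    nlinarith
  · have hsum : ∑ i, ∑ j, K i j • ((N i)ᵀ * (δ⁻¹ • X) * N j)
        = δ⁻¹ • ∑ i, ∑ j, K i j • ((N i)ᵀ * X * N j) := by
      rw [Finset.smul_sum]
      refine Finset.sum_congr rfl fun i _ => ?_
      rw [Finset.smul_sum]
      refine Finset.sum_congr rfl fun j _ => ?_
      rw [Matrix.mul_smul, Matrix.smul_mul, smul_comm]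
    have heq : (-S₂)
        - (Acᵀ * (δ⁻¹ • X) + (δ⁻¹ • X) * Ac + ∑ i, ∑ j, K i j • ((N i)ᵀ * (δ⁻¹ • X) * N j))
        = δ⁻¹ • ((-(Acᵀ * X + X * Ac + ∑ i, ∑ j, K i j • ((N i)ᵀ * X * N j))) - δ • S₂) := by
      rw [hsum, smul_sub, smul_smul, inv_mul_cancel₀ hδ.ne', one_smul]
      simp only [Matrix.smul_mul, Matrix.mul_smul]
      module
    rw [heq]
    exact possemidef_smul' hQ0 (by positivity)
  · intro x
    have := hmono x
    have h0 : (0:ℝ) < δ⁻¹ := inv_pos.mpr hδ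
    simp only [smul_mulVec, dotProduct_smul, smul_eq_mul]
    nlinarith
end

section
/- Let n ≥ 1 and f⁽³⁾ : ℝⁿ → ℝⁿ be defined by f⁽³⁾(x) = x − ‖x‖²·x. Then for all x, z ∈ ℝⁿ and for both choices of sign: ⟨x + z, f⁽³⁾(x) + f⁽³⁾(z)⟩ ≤ ‖x + z‖² and ⟨x − z, f⁽³⁾(x) − f⁽³⁾(z)⟩ ≤ ‖x − z‖². -/
/-- `f⁽³⁾(x) = x − ‖x‖²·x` satisfies the extended one-sided
Lipschitz condition `⟨x ± z, f⁽³⁾(x) ± f⁽³⁾(z)⟩ ≤ ‖x ± z‖²` for both signs. -/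
theorem stmt_8 (n : ℕ) (hn : 1 ≤ n)
    (f : (Fin n → ℝ) → (Fin n → ℝ))
    (hf : ∀ x : Fin n → ℝ, f x = x - (∑ i, (x i) ^ 2) • x) :
    ∀ x z : Fin n → ℝ,
      (∑ i, (x i + z i) * (f x i + f z i)) ≤ (∑ i, (x i + z i) ^ 2) ∧
      (∑ i, (x i - z i) * (f x i - f z i)) ≤ (∑ i, (x i - z i) ^ 2) := by
  intro x z
  set A : ℝ := ∑ i, (x i) ^ 2 with hA
  set B : ℝ := ∑ i, (z i) ^ 2 with hB
  set C : ℝ := ∑ i, x i * z i with hC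
  have hA0 : 0 ≤ A := Finset.sum_nonneg fun i _ => sq_nonneg _
  have hB0 : 0 ≤ B := Finset.sum_nonneg fun i _ => sq_nonneg _
  have hCS : C ^ 2 ≤ A * B := Finset.sum_mul_sq_le_sq_mul_sq _ _ _
  have key : 0 ≤ A ^ 2 + B ^ 2 + (A + B) * C := by
    nlinarith [sq_nonneg (A - B), sq_nonneg (A + B), sq_nonneg C, sq_nonneg (A ^ 2 + B ^ 2 + (A + B) * C), mul_nonneg hA0 hB0, sq_nonneg (A * B - C ^ 2)]
  have key2 : 0 ≤ A ^ 2 + B ^ 2 - (A + B) * C := by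
    nlinarith [sq_nonneg (A - B), sq_nonneg (A + B), sq_nonneg C, sq_nonneg (A ^ 2 + B ^ 2 - (A + B) * C), mul_nonneg hA0 hB0, sq_nonneg (A * B - C ^ 2)]
  have hfx : ∀ i, f x i = x i - A * x i := by
    intro i; rw [hf]; simp [hA]
  have hfz : ∀ i, f z i = z i - B * z i := by
    intro i; rw [hf]; simp [hB]
  constructor
  · have e : ∑ i, (x i + z i) * (f x i + f z i)
        = (∑ i, (x i + z i) ^ 2) - (A ^ 2 + B ^ 2 + (A + B) * C) := by
      have : ∀ i ∈ Finset.univ, (x i + z i) * (f x i + f z i)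
          = (x i + z i) ^ 2 - A * (x i ^ 2 + x i * z i) - B * (z i ^ 2 + x i * z i) := by
        intro i _; rw [hfx, hfz]; ring
      rw [Finset.sum_congr rfl this]
      simp only [Finset.sum_sub_distrib, ← Finset.mul_sum, Finset.sum_add_distrib]
      rw [← hA, ← hB, ← hC]; ring
    rw [e]; linarith
  · have e : ∑ i, (x i - z i) * (f x i - f z i)
        = (∑ i, (x i - z i) ^ 2) - (A ^ 2 + B ^ 2 - (A + B) * C) := by
      have : ∀ i ∈ Finset.univ, (x i - z i) * (f x i - f z i)
          = (x i - z i) ^ 2 - A * (x i ^ 2 - x i * z i) - B * (z i ^ 2 - x i * z i) := by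
        intro i _; rw [hfx, hfz]; ring
      rw [Finset.sum_congr rfl this]
      simp only [Finset.sum_sub_distrib, ← Finset.mul_sum]
      rw [← hA, ← hB, ← hC]; ring
    rw [e]; linarith
end

section
/- Let n ≥ 1, a ∈ ℝ, and f⁽¹⁾ : ℝⁿ → ℝⁿ be defined componentwise by f⁽¹⁾(x)_i = (1+a)·x_i² − x_i³ − a·x_i. Then for all x, z ∈ ℝⁿ, ⟨x − z, f⁽¹⁾(x) − f⁽¹⁾(z)⟩ ≤ ((a² − a + 1)/3)·‖x − z‖². -/
/-!
Each coordinate of `f⁽¹⁾` is the scalar cubic `g(s) = (1+a)s² − s³ − as`, whose difference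
quotient is `(g(s) − g(t))/(s − t) = (1+a)(s+t) − s² − t² − st − a`. Completing the square in
`s + t` bounds this by `(1+a)²/3 − a = (a² − a + 1)/3`; multiplying by `(s − t)²` and summing over
the coordinates gives the one-sided Lipschitz estimate.
-/

lemma mul_add_sub_sq_add_mul_add_sq_le (b s t : ℝ) :
    b * (s + t) - (s ^ 2 + s * t + t ^ 2) ≤ b ^ 2 / 3 := by
  nlinarith [sq_nonneg (s - t), sq_nonneg (s + t - 2 * b / 3)]

lemma cubic_oneSidedLipschitz (a s t : ℝ) :
    (s - t) * (((1 + a) * s ^ 2 - s ^ 3 - a * s) - ((1 + a) * t ^ 2 - t ^ 3 - a * t))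
      ≤ ((a ^ 2 - a + 1) / 3) * (s - t) ^ 2 := by
  have hfactor : (s - t) * (((1 + a) * s ^ 2 - s ^ 3 - a * s) - ((1 + a) * t ^ 2 - t ^ 3 - a * t))
      = (s - t) ^ 2 * ((1 + a) * (s + t) - s ^ 2 - t ^ 2 - s * t - a) := by ring
  have hconst : (a ^ 2 - a + 1) / 3 = (1 + a) ^ 2 / 3 - a := by ring
  rw [hfactor, hconst, mul_comm _ ((s - t) ^ 2)]
  gcongr
  linarith [mul_add_sub_sq_add_mul_add_sq_le (1 + a) s t]

theorem stmt_12_general (n : ℕ) (a : ℝ)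
    (f : (Fin n → ℝ) → (Fin n → ℝ))
    (hf : ∀ x : Fin n → ℝ, ∀ i : Fin n,
      f x i = (1 + a) * (x i) ^ 2 - (x i) ^ 3 - a * x i) :
    ∀ x z : Fin n → ℝ,
      (∑ i, (x i - z i) * (f x i - f z i))
        ≤ ((a ^ 2 - a + 1) / 3) * ∑ i, (x i - z i) ^ 2 := by
  intro x z
  rw [Finset.mul_sum]
  refine Finset.sum_le_sum fun i _ => ?_
  rw [hf x i, hf z i]
  exact cubic_oneSidedLipschitz a (x i) (z i)

/-- the componentwise cubic
`f⁽¹⁾(x)_i = (1+a)x_i² − x_i³ − a x_i` satisfies the one-sided Lipschitz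
condition `⟨x − z, f⁽¹⁾(x) − f⁽¹⁾(z)⟩ ≤ ((a² − a + 1)/3)‖x − z‖²`. -/
theorem stmt_12 (n : ℕ) (hn : 1 ≤ n) (a : ℝ)
    (f : (Fin n → ℝ) → (Fin n → ℝ))
    (hf : ∀ x : Fin n → ℝ, ∀ i : Fin n,
      f x i = (1 + a) * (x i) ^ 2 - (x i) ^ 3 - a * x i) :
    ∀ x z : Fin n → ℝ,
      (∑ i, (x i - z i) * (f x i - f z i))
        ≤ ((a ^ 2 - a + 1) / 3) * ∑ i, (x i - z i) ^ 2 :=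
  stmt_12_general n a f hf
end

section
/- Let a > −1 and define the scalar function f⁽¹⁾ : ℝ → ℝ by f⁽¹⁾(v) = (1+a)·v² − v³ − a·v. Then for every constant c ∈ ℝ there exists ε > 0 such that, with x = 1 and z = ε − 1, one has (x + z)·(f⁽¹⁾(x) + f⁽¹⁾(z)) > c·(x + z)². In particular, f⁽¹⁾ does not satisfy the plus-sign one-sided Lipschitz condition ⟨x + z, f⁽¹⁾(x) + f⁽¹⁾(z)⟩ ≤ c·‖x + z‖² for any constant c. -/
/-! With `x = 1` and `z = ε - 1` we have `x + z = ε`, so the inequality reads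
`ε (f 1 + f (ε - 1)) > c ε²`, i.e. `f 1 + f (ε - 1) - c ε > 0` for `ε > 0`. As `ε → 0⁺` the left
side tends to `f 1 + f (-1) = 2 (1 + a) > 0`, so small `ε` works whatever `c` is. -/

open Filter Topology

lemma eventually_mul_add_gt_mul_sq {g : ℝ → ℝ} {x : ℝ} (hg : ContinuousAt g (-x))
    (hpos : 0 < g x + g (-x)) (c : ℝ) :
    ∀ᶠ ε in 𝓝[>] 0, (x + (ε - x)) * (g x + g (ε - x)) > c * (x + (ε - x)) ^ 2 := by
  have hshift : ContinuousAt (fun ε : ℝ => g (ε - x)) 0 := by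
    apply ContinuousAt.comp (g := g) _ (continuousAt_id.sub continuousAt_const)
    simpa using hg
  have hlim : Tendsto (fun ε : ℝ => g x + g (ε - x) - c * ε) (𝓝 0) (𝓝 (g x + g (-x))) := by
    have hcont : ContinuousAt (fun ε : ℝ => g x + g (ε - x) - c * ε) 0 :=
      (continuousAt_const.add hshift).sub (continuousAt_const.mul continuousAt_id)
    simpa using hcont.tendsto
  filter_upwards [nhdsWithin_le_nhds (hlim.eventually (lt_mem_nhds hpos)), self_mem_nhdsWithin]
    with ε hε (hε0 : 0 < ε)
  have : 0 < ε * (g x + g (ε - x) - c * ε) := mul_pos hε0 hε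
  rw [add_sub_cancel]
  nlinarith

lemma exists_pos_mul_add_gt_mul_sq {g : ℝ → ℝ} {x : ℝ} (hg : ContinuousAt g (-x))
    (hpos : 0 < g x + g (-x)) (c : ℝ) :
    ∃ ε : ℝ, 0 < ε ∧ (x + (ε - x)) * (g x + g (ε - x)) > c * (x + (ε - x)) ^ 2 :=
  ((eventually_mul_add_gt_mul_sq hg hpos c).and self_mem_nhdsWithin).exists.imp
    fun _ h => ⟨h.2, h.1⟩

/-- for `a > −1` the scalar function
`f⁽¹⁾(v) = (1+a)v² − v³ − a v` violates the plus-sign one-sided Lipschitz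
condition: for every `c` there is `ε > 0` such that with `x = 1`, `z = ε − 1`
one has `(x+z)(f⁽¹⁾(x)+f⁽¹⁾(z)) > c(x+z)²`. -/
theorem stmt_13 (a : ℝ) (ha : -1 < a) (f : ℝ → ℝ)
    (hf : ∀ v : ℝ, f v = (1 + a) * v ^ 2 - v ^ 3 - a * v) :
    ∀ c : ℝ, ∃ ε : ℝ, 0 < ε ∧
      ((1 : ℝ) + (ε - 1)) * (f 1 + f (ε - 1)) > c * ((1 : ℝ) + (ε - 1)) ^ 2 := by
  obtain rfl : f = fun v => (1 + a) * v ^ 2 - v ^ 3 - a * v := funext hf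
  have hcont : Continuous fun v : ℝ => (1 + a) * v ^ 2 - v ^ 3 - a * v := by fun_prop
  have hpos : 0 < (1 + a) * 1 ^ 2 - 1 ^ 3 - a * 1 + ((1 + a) * (-1) ^ 2 - (-1) ^ 3 - a * (-1)) := by
    linarith
  exact exists_pos_mul_add_gt_mul_sq hcont.continuousAt hpos
end

section
/- Let A, B, C, N₁, …, N_d be real matrices of sizes n×n, n×m, p×n, n×n respectively, K = (k_ij) a positive semidefinite symmetric real d×d matrix, f : ℝⁿ → ℝⁿ, and c₁, c₂ ∈ ℝ. Suppose there exists a symmetric positive definite X ∈ ℝ^{n×n} such that (A+c₁I)ᵀX + X(A+c₁I) + Σ_{i,j=1}^d k_ij Nᵢᵀ X N_j is negative definite, and ⟨x ± z, X(f(x) ± f(z))⟩ ≤ c₂·(x ± z)ᵀX(x ± z) for all x, z ∈ ℝⁿ and both signs. Then there exist symmetric positive definite P, Q ∈ ℝ^{n×n} such that: (A+c₁I)ᵀP⁻¹ + P⁻¹(A+c₁I) + Σ_{i,j} k_ij Nᵢᵀ P⁻¹ N_j ⪯ −P⁻¹BBᵀP⁻¹; ⟨x + z, P⁻¹(f(x)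 + f(z))⟩ ≤ c₂·(x+z)ᵀP⁻¹(x+z) for all x, z; (A+c₁I)ᵀQ + Q(A+c₁I) + Σ_{i,j} k_ij Nᵢᵀ Q N_j ⪯ −CᵀC; and ⟨x − z, Q(f(x) − f(z))⟩ ≤ c₂·(x−z)ᵀQ(x−z) for all x, z. -/
open Matrix

lemma dot_le (n : ℕ) (T : Matrix (Fin n) (Fin n) ℝ) (y : Fin n → ℝ) :
    y ⬝ᵥ (T *ᵥ y) ≤ (∑ i, ∑ j, |T i j|) * (y ⬝ᵥ y) := by
  have hs : 0 ≤ y ⬝ᵥ y := by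
    simp only [dotProduct]
    exact Finset.sum_nonneg fun i _ => mul_self_nonneg _
  have hy : ∀ i, |y i| ≤ Real.sqrt (y ⬝ᵥ y) := by
    intro i
    rw [← Real.sqrt_mul_self (abs_nonneg (y i))]
    apply Real.sqrt_le_sqrt
    rw [abs_mul_abs_self]
    simp only [dotProduct]
    exact Finset.single_le_sum (fun j _ => mul_self_nonneg (y j)) (Finset.mem_univ i)
  have key : ∀ i j, y i * (T i j * y j) ≤ |T i j| * (y ⬝ᵥ y) := by
    intro i j
    calc y i * (T i j * y j) ≤ |y i * (T i j * y j)| := le_abs_self _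
    _ = |T i j| * (|y i| * |y j|) := by rw [abs_mul, abs_mul]; ring
    _ ≤ |T i j| * (Real.sqrt (y ⬝ᵥ y) * Real.sqrt (y ⬝ᵥ y)) := by
        apply mul_le_mul_of_nonneg_left _ (abs_nonneg _)
        exact mul_le_mul (hy i) (hy j) (abs_nonneg _) (Real.sqrt_nonneg _)
    _ = |T i j| * (y ⬝ᵥ y) := by rw [Real.mul_self_sqrt hs]
  calc y ⬝ᵥ (T *ᵥ y) = ∑ i, ∑ j, y i * (T i j * y j) := by
        simp [dotProduct, mulVec, Finset.mul_sum]
  _ ≤ ∑ i, ∑ j, |T i j| * (y ⬝ᵥ y) := by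
        apply Finset.sum_le_sum; intro i _; apply Finset.sum_le_sum; intro j _; exact key i j
  _ = (∑ i, ∑ j, |T i j|) * (y ⬝ᵥ y) := by rw [Finset.sum_mul]; congr 1; ext i; rw [Finset.sum_mul]

lemma dp_sq (n : ℕ) (W : Matrix (Fin n) (Fin n) ℝ) (y : Fin n → ℝ) :
    (W *ᵥ y) ⬝ᵥ (W *ᵥ y) = y ⬝ᵥ ((Wᵀ * W) *ᵥ y) := by
  rw [← mulVec_mulVec]
  rw [dotProduct_mulVec y, vecMul_transpose]

open scoped MatrixOrder in
lemma bound_below (n : ℕ) {M : Matrix (Fin n) (Fin n) ℝ} (hM : M.PosDef) :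
    ∃ C : ℝ, 0 ≤ C ∧ ∀ x : Fin n → ℝ, x ⬝ᵥ x ≤ C * (x ⬝ᵥ (M *ᵥ x)) := by
  set R := CFC.sqrt M with hR
  have hRherm : R.IsHermitian := (CFC.sqrt_nonneg M).posSemidef.1
  have hRt : Rᵀ = R := by
    rw [← conjTranspose_eq_transpose_of_trivial]; exact hRherm
  have hRR : R * R = M := CFC.sqrt_mul_sqrt_self M hM.posSemidef.nonneg
  have hdet : IsUnit R.det := by
    have h2 : R.det * R.det = M.det := by rw [← det_mul, hRR]
    refine isUnit_iff_ne_zero.2 fun h => ?_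
    rw [h, mul_zero] at h2
    exact hM.det_pos.ne' h2.symm
  set W := R⁻¹ with hW
  refine ⟨∑ i, ∑ j, |(Wᵀ * W) i j|,
    Finset.sum_nonneg fun i _ => Finset.sum_nonneg fun j _ => abs_nonneg _, fun x => ?_⟩
  have hMx : x ⬝ᵥ (M *ᵥ x) = (R *ᵥ x) ⬝ᵥ (R *ᵥ x) := by
    rw [dp_sq, hRt, hRR]
  have h1 : W *ᵥ (R *ᵥ x) = x := by
    rw [mulVec_mulVec, hW, nonsing_inv_mul R hdet, one_mulVec]
  calc x ⬝ᵥ x = (W *ᵥ (R *ᵥ x)) ⬝ᵥ (W *ᵥ (R *ᵥ x)) := by rw [h1]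
  _ = (R *ᵥ x) ⬝ᵥ ((Wᵀ * W) *ᵥ (R *ᵥ x)) := dp_sq n W _
  _ ≤ (∑ i, ∑ j, |(Wᵀ * W) i j|) * ((R *ᵥ x) ⬝ᵥ (R *ᵥ x)) := dot_le n _ _
  _ = (∑ i, ∑ j, |(Wᵀ * W) i j|) * (x ⬝ᵥ (M *ᵥ x)) := by rw [hMx]

lemma aux_small (n : ℕ) {M S : Matrix (Fin n) (Fin n) ℝ}
    (hM : M.PosDef) (hS : S.PosSemidef) :
    ∃ s : ℝ, 0 < s ∧ (M - s • S).PosSemidef := by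
  obtain ⟨C, hC0, hxx⟩ := bound_below n hM
  have hSt : Sᵀ = S := by
    rw [← conjTranspose_eq_transpose_of_trivial]; exact hS.1
  set c := ∑ i, ∑ j, |S i j| with hc
  have hc0 : 0 ≤ c := Finset.sum_nonneg fun i _ => Finset.sum_nonneg fun j _ => abs_nonneg _
  have hsmulherm : ((1 / (c * C + 1)) • S).IsHermitian := by
    rw [Matrix.IsHermitian, conjTranspose_smul]
    simp [hSt]
  refine ⟨1 / (c * C + 1), by positivity, .of_dotProduct_mulVec_nonneg (hM.1.sub hsmulherm) ?_⟩
  intro x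
  have hMpos : 0 ≤ x ⬝ᵥ (M *ᵥ x) := by
    have := hM.posSemidef.dotProduct_mulVec_nonneg x
    simpa using this
  have hSx : x ⬝ᵥ (S *ᵥ x) ≤ c * (x ⬝ᵥ x) := dot_le n S x
  have hs0 : (0:ℝ) < 1 / (c * C + 1) := by positivity
  have h2 : x ⬝ᵥ (S *ᵥ x) ≤ c * C * (x ⬝ᵥ (M *ᵥ x)) := by
    calc x ⬝ᵥ (S *ᵥ x) ≤ c * (x ⬝ᵥ x) := hSx
    _ ≤ c * (C * (x ⬝ᵥ (M *ᵥ x))) := mul_le_mul_of_nonneg_left (hxx x) hc0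
    _ = c * C * (x ⬝ᵥ (M *ᵥ x)) := by ring
  have key : (1 / (c * C + 1)) * (x ⬝ᵥ (S *ᵥ x)) ≤ x ⬝ᵥ (M *ᵥ x) := by
    calc (1 / (c * C + 1)) * (x ⬝ᵥ (S *ᵥ x)) ≤ (1 / (c * C + 1)) * (c * C * (x ⬝ᵥ (M *ᵥ x))) :=
          mul_le_mul_of_nonneg_left h2 hs0.le
    _ = (c * C / (c * C + 1)) * (x ⬝ᵥ (M *ᵥ x)) := by ring
    _ ≤ 1 * (x ⬝ᵥ (M *ᵥ x)) := by
          apply mul_le_mul_of_nonneg_right _ hMpos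
          rw [div_le_one (by positivity)]; linarith
    _ = x ⬝ᵥ (M *ᵥ x) := one_mul _
  have h3 : 0 ≤ x ⬝ᵥ ((M - (1 / (c * C + 1)) • S) *ᵥ x) := by
    rw [sub_mulVec, dotProduct_sub, smul_mulVec, dotProduct_smul]
    simp only [smul_eq_mul]
    linarith
  simpa using h3


lemma psd_smul (n : ℕ) {V : Matrix (Fin n) (Fin n) ℝ} (hV : V.PosSemidef) {t : ℝ}
    (ht : 0 ≤ t) : (t • V).PosSemidef := by
  have hVt : Vᵀ = V := by rw [← conjTranspose_eq_transpose_of_trivial]; exact hV.1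
  refine .of_dotProduct_mulVec_nonneg ?_ fun x => ?_
  · rw [Matrix.IsHermitian, conjTranspose_smul]
    simp [hVt]
  · have := hV.dotProduct_mulVec_nonneg x
    rw [smul_mulVec, dotProduct_smul]
    exact smul_nonneg ht this

lemma pd_smul (n : ℕ) {V : Matrix (Fin n) (Fin n) ℝ} (hV : V.PosDef) {t : ℝ}
    (ht : 0 < t) : (t • V).PosDef := by
  have hVt : Vᵀ = V := by rw [← conjTranspose_eq_transpose_of_trivial]; exact hV.1
  refine .of_dotProduct_mulVec_pos ?_ fun x hx => ?_
  · rw [Matrix.IsHermitian, conjTranspose_smul]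
    simp [hVt]
  · have := hV.dotProduct_mulVec_pos hx
    rw [smul_mulVec, dotProduct_smul]
    exact smul_pos ht this


/-- existence of global one-sided Lipschitz Gramians `P, Q`
under a shifted Lyapunov inequality and `X`-weighted extended one-sided
Lipschitz conditions (both signs). -/
theorem stmt_14 (n m p d : ℕ)
    (A : Matrix (Fin n) (Fin n) ℝ) (B : Matrix (Fin n) (Fin m) ℝ)
    (C : Matrix (Fin p) (Fin n) ℝ) (N : Fin d → Matrix (Fin n) (Fin n) ℝ)
    (K : Matrix (Fin d) (Fin d) ℝ) (hK : K.PosSemidef)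
    (f : (Fin n → ℝ) → (Fin n → ℝ)) (c₁ c₂ : ℝ)
    (X : Matrix (Fin n) (Fin n) ℝ) (hX : X.PosDef)
    (hLyap : (-((A + c₁ • (1 : Matrix (Fin n) (Fin n) ℝ))ᵀ * X
        + X * (A + c₁ • (1 : Matrix (Fin n) (Fin n) ℝ))
        + ∑ i, ∑ j, K i j • ((N i)ᵀ * X * N j))).PosDef)
    (hlipPlus : ∀ x z : Fin n → ℝ,
      (x + z) ⬝ᵥ (X *ᵥ (f x + f z)) ≤ c₂ * ((x + z) ⬝ᵥ (X *ᵥ (x + z))))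
    (hlipMinus : ∀ x z : Fin n → ℝ,
      (x - z) ⬝ᵥ (X *ᵥ (f x - f z)) ≤ c₂ * ((x - z) ⬝ᵥ (X *ᵥ (x - z)))) :
    ∃ P Q : Matrix (Fin n) (Fin n) ℝ, P.PosDef ∧ Q.PosDef ∧
      ((-(P⁻¹ * B * Bᵀ * P⁻¹))
        - ((A + c₁ • (1 : Matrix (Fin n) (Fin n) ℝ))ᵀ * P⁻¹
          + P⁻¹ * (A + c₁ • (1 : Matrix (Fin n) (Fin n) ℝ))
          + ∑ i, ∑ j, K i j • ((N i)ᵀ * P⁻¹ * N j))).PosSemidef ∧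
      (∀ x z : Fin n → ℝ,
        (x + z) ⬝ᵥ (P⁻¹ *ᵥ (f x + f z)) ≤ c₂ * ((x + z) ⬝ᵥ (P⁻¹ *ᵥ (x + z)))) ∧
      ((-(Cᵀ * C))
        - ((A + c₁ • (1 : Matrix (Fin n) (Fin n) ℝ))ᵀ * Q
          + Q * (A + c₁ • (1 : Matrix (Fin n) (Fin n) ℝ))
          + ∑ i, ∑ j, K i j • ((N i)ᵀ * Q * N j))).PosSemidef ∧
      (∀ x z : Fin n → ℝ,
        (x - z) ⬝ᵥ (Q *ᵥ (f x - f z)) ≤ c₂ * ((x - z) ⬝ᵥ (Q *ᵥ (x - z)))) := by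
  set Ac := A + c₁ • (1 : Matrix (Fin n) (Fin n) ℝ) with hAc
  set L := Acᵀ * X + X * Ac + ∑ i, ∑ j, K i j • ((N i)ᵀ * X * N j) with hL
  have hXt : Xᵀ = X := by rw [← conjTranspose_eq_transpose_of_trivial]; exact hX.1
  -- scaling of the Lyapunov expression
  have scale : ∀ t : ℝ, Acᵀ * (t • X) + (t • X) * Ac
      + ∑ i, ∑ j, K i j • ((N i)ᵀ * (t • X) * N j) = t • L := by
    intro t
    rw [hL, Matrix.mul_smul, Matrix.smul_mul, smul_add, smul_add, Finset.smul_sum]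
    congr 1
    refine Finset.sum_congr rfl fun i _ => ?_
    rw [Finset.smul_sum]
    refine Finset.sum_congr rfl fun j _ => ?_
    rw [Matrix.mul_smul, Matrix.smul_mul, smul_comm]
  -- the P part
  have hT : (X * B * Bᵀ * X).PosSemidef := by
    have h1 : (Bᵀ * X)ᴴ * (Bᵀ * X) = X * B * Bᵀ * X := by
      rw [conjTranspose_eq_transpose_of_trivial, transpose_mul, transpose_transpose, hXt]
      simp [Matrix.mul_assoc]
    exact h1 ▸ posSemidef_conjTranspose_mul_self (Bᵀ * X)
  obtain ⟨s, hs, hsP⟩ := aux_small n hLyap hT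
  have hsX : (s • X).PosDef := pd_smul n hX hs
  have hsXdet : IsUnit (s • X).det := isUnit_iff_ne_zero.2 hsX.det_pos.ne'
  set P := (s • X)⁻¹ with hP
  have hPinv : P⁻¹ = s • X := by rw [hP, Matrix.nonsing_inv_nonsing_inv _ hsXdet]
  -- the Q part
  have hCC : (Cᵀ * C).PosSemidef := by
    have h1 : Cᴴ * C = Cᵀ * C := by rw [conjTranspose_eq_transpose_of_trivial]
    exact h1 ▸ posSemidef_conjTranspose_mul_self C
  obtain ⟨t, ht, htQ⟩ := aux_small n hLyap hCC
  set Q := t⁻¹ • X with hQ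
  have hQpd : Q.PosDef := pd_smul n hX (by positivity)
  refine ⟨P, Q, hsX.inv, hQpd, ?_, ?_, ?_, ?_⟩
  · -- Lyapunov for P
    have heq : (-(P⁻¹ * B * Bᵀ * P⁻¹))
        - (Acᵀ * P⁻¹ + P⁻¹ * Ac + ∑ i, ∑ j, K i j • ((N i)ᵀ * P⁻¹ * N j))
        = s • ((-L) - s • (X * B * Bᵀ * X)) := by
      rw [hPinv, scale s]
      simp only [Matrix.smul_mul, Matrix.mul_smul, smul_smul, smul_sub, smul_neg]
      abel
    rw [heq]
    exact psd_smul n hsP hs.le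
  · -- Lipschitz for P
    intro x z
    rw [hPinv, smul_mulVec, smul_mulVec, dotProduct_smul, dotProduct_smul,
      smul_eq_mul, smul_eq_mul]
    calc s * ((x + z) ⬝ᵥ (X *ᵥ (f x + f z))) ≤ s * (c₂ * ((x + z) ⬝ᵥ (X *ᵥ (x + z)))) :=
          mul_le_mul_of_nonneg_left (hlipPlus x z) hs.le
    _ = c₂ * (s * ((x + z) ⬝ᵥ (X *ᵥ (x + z)))) := by ring
  · -- Lyapunov for Q
    have heq : (-(Cᵀ * C))
        - (Acᵀ * Q + Q * Ac + ∑ i, ∑ j, K i j • ((N i)ᵀ * Q * N j))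
        = t⁻¹ • ((-L) - t • (Cᵀ * C)) := by
      rw [hQ, scale t⁻¹, smul_sub, smul_smul, inv_mul_cancel₀ ht.ne', one_smul, smul_neg]
      abel
    rw [heq]
    exact psd_smul n htQ (by positivity)
  · -- Lipschitz for Q
    intro x z
    rw [hQ, smul_mulVec, smul_mulVec, dotProduct_smul, dotProduct_smul,
      smul_eq_mul, smul_eq_mul]
    calc t⁻¹ * ((x - z) ⬝ᵥ (X *ᵥ (f x - f z))) ≤ t⁻¹ * (c₂ * ((x - z) ⬝ᵥ (X *ᵥ (x - z)))) :=
          mul_le_mul_of_nonneg_left (hlipMinus x z) (by positivity)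
    _ = c₂ * (t⁻¹ * ((x - z) ⬝ᵥ (X *ᵥ (x - z)))) := by ring
end

section
/- Let P ∈ ℝ^{n×n} be symmetric positive definite, K ∈ ℝ^{d×d} symmetric positive definite, A, B ∈ ℝ^{n×n}, ℝ^{n×m}, N₁, …, N_d ∈ ℝ^{n×n}, and c₁ ∈ ℝ. Let 𝒩 ∈ ℝ^{(nd)×n} be the block matrix stacking N₁, …, N_d vertically, so 𝒩ᵀ = [N₁ᵀ … N_dᵀ]. Then the following are equivalent: (i) (A+c₁I)P + P(A+c₁I)ᵀ + BBᵀ + Σ_{i,j=1}^d k_ij · P Nᵢᵀ P⁻¹ N_j P ⪯ 0; (ii) the symmetric block matrix with blocks [(A+c₁I)P + P(A+c₁I)ᵀ + BBᵀ , P𝒩ᵀ ; 𝒩P , −K⁻¹ ⊗ P] is negative semidefinite, where ⊗ is the Kronecker product. -/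
open Matrix Kronecker

theorem aux_posDef_conjTranspose_mul_self {k : Type*} [Fintype k] [DecidableEq k]
    (A : Matrix k k ℝ) (hA : IsUnit A) : (Aᴴ * A).PosDef := by
  refine Matrix.posDef_iff_dotProduct_mulVec.mpr ⟨(Matrix.posSemidef_conjTranspose_mul_self A).1, fun x hx => ?_⟩
  have h1 : star x ⬝ᵥ (Aᴴ * A).mulVec x = (A.mulVec x) ⬝ᵥ (A.mulVec x) := by
    rw [← mulVec_mulVec, dotProduct_mulVec, ← transpose_transpose Aᴴ, vecMul_transpose]
    simp [mulVec, dotProduct, star, mul_comm]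
  rw [h1]
  have hAx : A.mulVec x ≠ 0 := fun h => hx <| by
    have hinj := Matrix.mulVec_injective_iff_isUnit.mpr hA
    exact hinj (by simp [h])
  have h0 : A.mulVec x ⬝ᵥ A.mulVec x ≠ 0 := fun h => hAx (by
    ext i
    have := Finset.sum_eq_zero_iff_of_nonneg
      (fun i _ => mul_self_nonneg (A.mulVec x i)) |>.mp h i (Finset.mem_univ i)
    simpa [mul_self_eq_zero] using this)
  have hnn : 0 ≤ A.mulVec x ⬝ᵥ A.mulVec x :=
    Finset.sum_nonneg fun i _ => mul_self_nonneg _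
  exact lt_of_le_of_ne hnn (Ne.symm h0)

theorem aux_kron_posDef {d' n' : Type*} [Fintype d'] [Fintype n'] [DecidableEq d'] [DecidableEq n']
    {M : Matrix d' d' ℝ} {Q : Matrix n' n' ℝ}
    (hM : M.PosDef) (hQ : Q.PosDef) : (M ⊗ₖ Q).PosDef := by
  exact hM.kronecker hQ

theorem aux_key_sum (n d : ℕ) (Pi : Matrix (Fin n) (Fin n) ℝ) (K : Matrix (Fin d) (Fin d) ℝ)
    (N : Fin d → Matrix (Fin n) (Fin n) ℝ)
    (𝒩 : Matrix (Fin d × Fin n) (Fin n) ℝ)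
    (h𝒩 : ∀ (i : Fin d) (r c : Fin n), 𝒩 (i, r) c = N i r c) :
    𝒩ᵀ * ((K ⊗ₖ Pi) * 𝒩)
      = ∑ i, ∑ j, K i j • ((N i)ᵀ * Pi * N j) := by
  ext a b
  simp only [Matrix.sum_apply, Matrix.smul_apply, Matrix.mul_apply, Matrix.transpose_apply,
    Matrix.kroneckerMap_apply, Fintype.sum_prod_type, h𝒩, smul_eq_mul, Finset.mul_sum,
    Finset.sum_mul]
  refine Finset.sum_congr rfl fun i _ => ?_
  rw [Finset.sum_comm]
  refine Finset.sum_congr rfl fun j _ => ?_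
  rw [Finset.sum_comm]
  exact Finset.sum_congr rfl fun r _ => Finset.sum_congr rfl fun s _ => by ring

/-- Schur complement reformulation of the Gramian inequality.
With `𝒩` the vertical stacking of `N₁,…,N_d`, the inequality
`(A+c₁I)P + P(A+c₁I)ᵀ + BBᵀ + Σ k_ij P Nᵢᵀ P⁻¹ N_j P ⪯ 0` holds if and only
if the block matrix
`[(A+c₁I)P + P(A+c₁I)ᵀ + BBᵀ, P𝒩ᵀ; 𝒩P, −K⁻¹ ⊗ P]` is negative semidefinite. -/
theorem stmt_18 (n m d : ℕ)
    (P : Matrix (Fin n) (Fin n) ℝ) (hP : P.PosDef)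
    (K : Matrix (Fin d) (Fin d) ℝ) (hK : K.PosDef)
    (A : Matrix (Fin n) (Fin n) ℝ) (B : Matrix (Fin n) (Fin m) ℝ)
    (N : Fin d → Matrix (Fin n) (Fin n) ℝ) (c₁ : ℝ)
    (𝒩 : Matrix (Fin d × Fin n) (Fin n) ℝ)
    (h𝒩 : ∀ (i : Fin d) (r c : Fin n), 𝒩 (i, r) c = N i r c) :
    (-( (A + c₁ • (1 : Matrix (Fin n) (Fin n) ℝ)) * P
        + P * (A + c₁ • (1 : Matrix (Fin n) (Fin n) ℝ))ᵀ + B * Bᵀ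
        + ∑ i, ∑ j, K i j • (P * (N i)ᵀ * P⁻¹ * N j * P))).PosSemidef
    ↔ (-(Matrix.fromBlocks
          ((A + c₁ • (1 : Matrix (Fin n) (Fin n) ℝ)) * P
            + P * (A + c₁ • (1 : Matrix (Fin n) (Fin n) ℝ))ᵀ + B * Bᵀ)
          (P * 𝒩ᵀ)
          (𝒩 * P)
          (-(K⁻¹ ⊗ₖ P)))).PosSemidef := by
  set L := (A + c₁ • (1 : Matrix (Fin n) (Fin n) ℝ)) * P
      + P * (A + c₁ • (1 : Matrix (Fin n) (Fin n) ℝ))ᵀ + B * Bᵀ with hL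
  set X := P * 𝒩ᵀ with hX
  have hD : (K⁻¹ ⊗ₖ P).PosDef := aux_kron_posDef hK.inv hP
  haveI : Invertible (K⁻¹ ⊗ₖ P) :=
    (K⁻¹ ⊗ₖ P).invertibleOfIsUnitDet ((Matrix.isUnit_iff_isUnit_det _).mp hD.isUnit)
  have hXH : (-X)ᴴ = -(𝒩 * P) := by
    rw [hX]
    simp [Matrix.conjTranspose_neg, Matrix.conjTranspose_mul, hP.1.eq]
    rw [show Pᵀ = P from hP.1]
  have hblock : -(Matrix.fromBlocks L X (𝒩 * P) (-(K⁻¹ ⊗ₖ P)))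
      = Matrix.fromBlocks (-L) (-X) ((-X)ᴴ) (K⁻¹ ⊗ₖ P) := by
    rw [hXH, Matrix.fromBlocks_neg, neg_neg]
  rw [hblock, Matrix.PosDef.fromBlocks₂₂ (-L) (-X) hD]
  have hDinv : (K⁻¹ ⊗ₖ P)⁻¹ = K ⊗ₖ P⁻¹ := by
    rw [Matrix.inv_kronecker, Matrix.nonsing_inv_nonsing_inv K
      ((Matrix.isUnit_iff_isUnit_det K).mp hK.isUnit)]
  have hkey : X * (K ⊗ₖ P⁻¹) * (𝒩 * P)
      = ∑ i, ∑ j, K i j • (P * (N i)ᵀ * P⁻¹ * N j * P) := by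
    have h1 := aux_key_sum n d P⁻¹ K N 𝒩 h𝒩
    calc X * (K ⊗ₖ P⁻¹) * (𝒩 * P)
        = P * (𝒩ᵀ * ((K ⊗ₖ P⁻¹) * 𝒩)) * P := by
          rw [hX]; simp only [Matrix.mul_assoc]
      _ = P * (∑ i, ∑ j, K i j • ((N i)ᵀ * P⁻¹ * N j)) * P := by rw [h1]
      _ = ∑ i, ∑ j, K i j • (P * (N i)ᵀ * P⁻¹ * N j * P) := by
          simp only [Finset.mul_sum, Finset.sum_mul, Matrix.mul_smul, Matrix.smul_mul]
          exact Finset.sum_congr rfl fun i _ => Finset.sum_congr rfl fun j _ => by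
            simp only [Matrix.mul_assoc]
  have heq : -L - -X * (K⁻¹ ⊗ₖ P)⁻¹ * (-X)ᴴ
      = -(L + ∑ i, ∑ j, K i j • (P * (N i)ᵀ * P⁻¹ * N j * P)) := by
    rw [hDinv, hXH]
    simp only [Matrix.neg_mul, Matrix.mul_neg, neg_neg, hkey]
    abel
  rw [heq]
end

section
/- Let A, N₁, …, N_d ∈ ℝ^{n×n}, G ∈ ℝ^{p×n}, K = (k_ij) a symmetric positive semidefinite d×d matrix, c₁ ∈ ℝ, and D = diag(d₁, …, d_n) a diagonal matrix with strictly positive diagonal entries. Suppose (A+c₁I)ᵀD + D(A+c₁I) + Σ_{i,j=1}^d k_ij Nᵢᵀ D N_j ⪯ −GᵀG. Then for every k ≤ n, writing A_k, N_{k,i}, D_k for the leading principal k×k submatrices of A, N_i, D and G_k for the matrix of the first k columns of G, one has (A_k+c₁I)ᵀD_k + D_k(A_k+c₁I) + Σ_{i,j=1}^d k_ij N_{k,i}ᵀ D_k N_{k,j} ⪯ −G_kᵀG_k. -/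
open Matrix

namespace Stmt19
variable {n k p d : ℕ}

/-- the `n × k` embedding matrix -/
def emb (hk : k ≤ n) : Matrix (Fin n) (Fin k) ℝ :=
  (1 : Matrix (Fin n) (Fin n) ℝ).submatrix id (Fin.castLE hk)

lemma mul_emb (hk : k ≤ n) (M : Matrix (Fin p) (Fin n) ℝ) :
    M * emb hk = M.submatrix id (Fin.castLE hk) := by
  have := mul_submatrix_one (Equiv.refl (Fin n)) (Fin.castLE hk) M
  simpa [emb] using this

lemma emb_tr (hk : k ≤ n) :
    (emb hk)ᵀ = (1 : Matrix (Fin n) (Fin n) ℝ).submatrix (Fin.castLE hk) id := by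
  simp [emb, transpose_submatrix]

lemma tr_emb_mul (hk : k ≤ n) (M : Matrix (Fin n) (Fin p) ℝ) :
    (emb hk)ᵀ * M = M.submatrix (Fin.castLE hk) id := by
  rw [emb_tr]
  have := one_submatrix_mul (Fin.castLE hk) (Equiv.refl (Fin n)) M
  simpa using this

lemma emb_sub (hk : k ≤ n) (M : Matrix (Fin n) (Fin n) ℝ) :
    (emb hk)ᵀ * M * emb hk = M.submatrix (Fin.castLE hk) (Fin.castLE hk) := by
  rw [tr_emb_mul, mul_emb, submatrix_submatrix]
  simp

lemma emb_tr_mul_emb (hk : k ≤ n) : (emb hk)ᵀ * emb hk = 1 := by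
  have h := emb_sub hk 1
  rwa [Matrix.mul_one, submatrix_one _ (Fin.castLE_injective hk)] at h

lemma emb_mul_emb_tr (hk : k ≤ n) :
    emb hk * (emb hk)ᵀ
      = diagonal (fun i : Fin n => if (i : ℕ) < k then (1 : ℝ) else 0) := by
  ext i j
  simp only [mul_apply, emb, transpose_apply, submatrix_apply, id_eq, one_apply, diagonal_apply]
  by_cases h : (i : ℕ) < k
  · rw [Finset.sum_eq_single (⟨(i : ℕ), h⟩ : Fin k)]
    · by_cases hij : i = j
      · subst hij
        simp [Fin.ext_iff, h]
      · have h2 : ¬ j = Fin.castLE hk ⟨(i:ℕ), h⟩ := by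
          intro hc
          exact hij (Fin.ext (by rw [hc]; simp))
        have h3 : ¬ (j : ℕ) = (i : ℕ) := fun hc => hij (Fin.ext hc.symm)
        simp [Fin.ext_iff, hij, h2, h3]
    · intro b _ hb
      have : ¬ i = Fin.castLE hk b := by
        intro hc
        exact hb (Fin.ext (by simpa [Fin.ext_iff] using hc.symm))
      simp [this]
    · simp
  · have hz : ∀ b : Fin k, ¬ i = Fin.castLE hk b := by
      intro b hc
      apply h
      rw [hc]
      simpa using b.isLt
    by_cases hij : i = j
    · subst hij
      simp [h, hz]
    · simp [hij, hz, h]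

lemma psd_sum {m : Type*} [Fintype m] [DecidableEq m] (f : Fin d → Matrix m m ℝ)
    (h : ∀ s, (f s).PosSemidef) : (∑ s, f s).PosSemidef :=
  Finset.sum_induction f _ (fun _ _ ha hb => ha.add hb) Matrix.PosSemidef.zero
    (fun s _ => h s)


lemma submatrix_sum {ι : Type*} (s : Finset ι) (f : ι → Matrix (Fin n) (Fin n) ℝ)
    (e g : Fin k → Fin n) :
    (∑ i ∈ s, f i).submatrix e g = ∑ i ∈ s, (f i).submatrix e g := by
  ext a b
  simp [Matrix.submatrix_apply, Matrix.sum_apply]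

lemma submatrix_smul' (r : ℝ) (A : Matrix (Fin n) (Fin n) ℝ) (e g : Fin k → Fin n) :
    (r • A).submatrix e g = r • A.submatrix e g := rfl

lemma sum_smul_psd (L : Matrix (Fin d) (Fin d) ℝ) (C : Fin d → Matrix (Fin n) (Fin k) ℝ) :
    (∑ i, ∑ j, (Lᴴ * L) i j • ((C i)ᵀ * C j)).PosSemidef := by
  have hentry : ∀ i j, (Lᴴ * L) i j = ∑ s, L s i * L s j := by
    intro i j
    simp [Matrix.mul_apply, conjTranspose_apply]
  have key : ∑ i, ∑ j, (Lᴴ * L) i j • ((C i)ᵀ * C j)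
      = ∑ s, (∑ i, L s i • C i)ᵀ * (∑ j, L s j • C j) := by
    simp only [hentry, Finset.sum_smul, transpose_sum, transpose_smul, Matrix.sum_mul,
      Matrix.mul_sum, Matrix.smul_mul, Matrix.mul_smul, Finset.smul_sum, smul_smul]
    refine Eq.trans (Eq.trans (Finset.sum_congr rfl fun a _ => Finset.sum_comm)
      Finset.sum_comm) ?_
    refine Finset.sum_congr rfl fun s _ => Eq.trans Finset.sum_comm ?_
    refine Finset.sum_congr rfl fun b _ => Finset.sum_congr rfl fun a _ => by rw [mul_comm]
  rw [key]
  refine psd_sum _ fun s => ?_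
  have h := posSemidef_conjTranspose_mul_self (∑ j, L s j • C j)
  rwa [conjTranspose_eq_transpose_of_trivial] at h

end Stmt19

set_option maxHeartbeats 1000000
open Stmt19

/-- truncation step. If a positive diagonal `D` satisfies the
Lyapunov-type inequality
`(A+c₁I)ᵀD + D(A+c₁I) + Σ k_ij Nᵢᵀ D N_j ⪯ −GᵀG`,
then the leading principal `k×k` submatrices satisfy the same inequality
`(A_k+c₁I)ᵀD_k + D_k(A_k+c₁I) + Σ k_ij N_{k,i}ᵀ D_k N_{k,j} ⪯ −G_kᵀG_k`. -/
theorem stmt_19 (n p d : ℕ)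
    (A : Matrix (Fin n) (Fin n) ℝ)
    (N : Fin d → Matrix (Fin n) (Fin n) ℝ)
    (G : Matrix (Fin p) (Fin n) ℝ)
    (K : Matrix (Fin d) (Fin d) ℝ) (hK : K.PosSemidef)
    (c₁ : ℝ)
    (dd : Fin n → ℝ) (hdd : ∀ i, 0 < dd i)
    (D : Matrix (Fin n) (Fin n) ℝ) (hD : D = Matrix.diagonal dd)
    (hLyap : ((-(Gᵀ * G))
        - ((A + c₁ • (1 : Matrix (Fin n) (Fin n) ℝ))ᵀ * D
          + D * (A + c₁ • (1 : Matrix (Fin n) (Fin n) ℝ))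
          + ∑ i, ∑ j, K i j • ((N i)ᵀ * D * N j))).PosSemidef) :
    ∀ (k : ℕ) (hk : k ≤ n),
      ((-((G.submatrix id (Fin.castLE hk))ᵀ * G.submatrix id (Fin.castLE hk)))
        - ((A.submatrix (Fin.castLE hk) (Fin.castLE hk)
              + c₁ • (1 : Matrix (Fin k) (Fin k) ℝ))ᵀ
            * D.submatrix (Fin.castLE hk) (Fin.castLE hk)
          + D.submatrix (Fin.castLE hk) (Fin.castLE hk)
            * (A.submatrix (Fin.castLE hk) (Fin.castLE hk)
              + c₁ • (1 : Matrix (Fin k) (Fin k) ℝ))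
          + ∑ i, ∑ j, K i j •
              (((N i).submatrix (Fin.castLE hk) (Fin.castLE hk))ᵀ
                * D.submatrix (Fin.castLE hk) (Fin.castLE hk)
                * (N j).submatrix (Fin.castLE hk) (Fin.castLE hk)))).PosSemidef := by
  intro k hk
  set E : Matrix (Fin n) (Fin k) ℝ := emb hk with hEdef
  set c : Fin k → Fin n := Fin.castLE hk with hcdef
  have hEE : Eᵀ * E = 1 := emb_tr_mul_emb hk
  have hP : E * Eᵀ = diagonal (fun i : Fin n => if (i : ℕ) < k then (1:ℝ) else 0) :=
    emb_mul_emb_tr hk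
  have hsub : ∀ M : Matrix (Fin n) (Fin n) ℝ, Eᵀ * M * E = M.submatrix c c := emb_sub hk
  have hGs : G.submatrix id c = G * E := (mul_emb hk G).symm
  -- the truncated diagonal
  have hDtr : D.submatrix c c = diagonal (fun b => dd (c b)) := by
    rw [hD]
    exact submatrix_diagonal dd c (Fin.castLE_injective hk)
  have hED : E * D.submatrix c c = D * E := by
    rw [← hsub D, ← Matrix.mul_assoc, ← Matrix.mul_assoc, hP, hD]
    rw [diagonal_mul_diagonal]
    have : (fun i : Fin n => (if (i : ℕ) < k then (1:ℝ) else 0) * dd i)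
        = fun i : Fin n => dd i * (if (i : ℕ) < k then (1:ℝ) else 0) := by
      funext i; ring
    rw [this, ← diagonal_mul_diagonal, Matrix.mul_assoc, ← hP, Matrix.mul_assoc,
      hEE]
    rw [Matrix.mul_one]
  have hDE' : D.submatrix c c * Eᵀ = Eᵀ * D := by
    have h := congrArg Matrix.transpose hED
    rw [transpose_mul, transpose_mul, hDtr, diagonal_transpose, hD, diagonal_transpose] at h
    rw [hDtr, hD]
    exact h
  -- the tail square root
  set S : Matrix (Fin n) (Fin n) ℝ :=
    diagonal (fun i : Fin n => if (i : ℕ) < k then 0 else Real.sqrt (dd i)) with hSdef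
  have hEDE : E * D.submatrix c c * Eᵀ = D - S * S := by
    rw [hED, Matrix.mul_assoc, hP, hD, hSdef, diagonal_mul_diagonal, diagonal_mul_diagonal,
      diagonal_sub]
    ext i j
    rcases eq_or_ne i j with rfl | hij
    · by_cases h : (i : ℕ) < k <;> simp [h, Real.mul_self_sqrt (hdd i).le]
    · simp [Matrix.diagonal_apply_ne _ hij]
  set C : Fin d → Matrix (Fin n) (Fin k) ℝ := fun i => S * N i * E with hCdef
  -- piece identities
  have eG : (G.submatrix id c)ᵀ * G.submatrix id c = (Gᵀ * G).submatrix c c := by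
    rw [hGs, ← hsub (Gᵀ * G)]
    simp only [transpose_mul, Matrix.mul_assoc]
  have eA : (A.submatrix c c)ᵀ * D.submatrix c c = (Aᵀ * D).submatrix c c := by
    rw [← hsub A, ← hsub (Aᵀ * D)]
    simp only [transpose_mul, transpose_transpose]
    calc Eᵀ * (Aᵀ * Eᵀᵀ) * D.submatrix c c
        = Eᵀ * Aᵀ * (E * D.submatrix c c) := by
          simp only [transpose_transpose, Matrix.mul_assoc]
      _ = Eᵀ * (Aᵀ * D) * E := by rw [hED]; simp only [Matrix.mul_assoc]
  have eA2 : D.submatrix c c * A.submatrix c c = (D * A).submatrix c c := by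
    rw [← hsub A, ← hsub (D * A)]
    calc D.submatrix c c * (Eᵀ * A * E)
        = (D.submatrix c c * Eᵀ) * A * E := by simp only [Matrix.mul_assoc]
      _ = Eᵀ * (D * A) * E := by rw [hDE']; simp only [Matrix.mul_assoc]
  have eN : ∀ i j : Fin d,
      ((N i).submatrix c c)ᵀ * D.submatrix c c * (N j).submatrix c c
        = ((N i)ᵀ * D * N j).submatrix c c - (C i)ᵀ * C j := by
    intro i j
    rw [← hsub (N i), ← hsub (N j), ← hsub ((N i)ᵀ * D * N j), hCdef]
    have hSt : Sᵀ = S := by rw [hSdef, diagonal_transpose]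
    simp only [transpose_mul, transpose_transpose, hSt]
    calc Eᵀ * ((N i)ᵀ * Eᵀᵀ) * D.submatrix c c * (Eᵀ * N j * E)
        = Eᵀ * (N i)ᵀ * (E * D.submatrix c c * Eᵀ) * (N j * E) := by
          simp only [transpose_transpose, Matrix.mul_assoc]
      _ = Eᵀ * (N i)ᵀ * (D - S * S) * (N j * E) := by rw [hEDE]
      _ = Eᵀ * ((N i)ᵀ * D * N j) * E - Eᵀ * ((N i)ᵀ * S) * (S * (N j * E)) := by
          rw [Matrix.mul_sub, Matrix.sub_mul]
          simp only [Matrix.mul_assoc]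
      _ = Eᵀ * ((N i)ᵀ * D * N j) * E - Eᵀ * ((N i)ᵀ * S) * (S * N j * E) := by
          simp only [Matrix.mul_assoc]
  have hsumN : ∑ i, ∑ j, K i j •
        (((N i).submatrix c c)ᵀ * D.submatrix c c * (N j).submatrix c c)
      = (∑ i, ∑ j, K i j • ((N i)ᵀ * D * N j)).submatrix c c
        - ∑ i, ∑ j, K i j • ((C i)ᵀ * C j) := by
    simp only [eN, smul_sub, Finset.sum_sub_distrib, submatrix_sum, submatrix_smul']
  have key : (-((G.submatrix id c)ᵀ * G.submatrix id c))
        - ((A.submatrix c c + c₁ • (1 : Matrix (Fin k) (Fin k) ℝ))ᵀ * D.submatrix c c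
          + D.submatrix c c * (A.submatrix c c + c₁ • (1 : Matrix (Fin k) (Fin k) ℝ))
          + ∑ i, ∑ j, K i j •
              (((N i).submatrix c c)ᵀ * D.submatrix c c * (N j).submatrix c c))
      = ((-(Gᵀ * G))
          - ((A + c₁ • (1 : Matrix (Fin n) (Fin n) ℝ))ᵀ * D
            + D * (A + c₁ • (1 : Matrix (Fin n) (Fin n) ℝ))
            + ∑ i, ∑ j, K i j • ((N i)ᵀ * D * N j))).submatrix c c
        + ∑ i, ∑ j, K i j • ((C i)ᵀ * C j) := by
    rw [hsumN, eG]
    simp only [transpose_add, transpose_smul, transpose_one, Matrix.add_mul, Matrix.mul_add,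
      Matrix.smul_mul, Matrix.mul_smul, Matrix.one_mul, Matrix.mul_one, Matrix.submatrix_sub,
      Matrix.submatrix_add, Matrix.submatrix_neg, submatrix_smul', submatrix_sum]
    simp only [Pi.sub_apply, Pi.add_apply, Pi.neg_apply, Pi.smul_apply, submatrix_smul',
      submatrix_sum]
    rw [eA, eA2]
    abel
  rw [key]
  obtain ⟨B, hB⟩ : ∃ B : Matrix (Fin d) (Fin d) ℝ, K = Bᴴ * B := by
    open scoped MatrixOrder in
    exact CStarAlgebra.nonneg_iff_eq_star_mul_self.mp hK.nonneg
  have hC : (∑ i, ∑ j, K i j • ((C i)ᵀ * C j)).PosSemidef := by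
    have h := sum_smul_psd B C
    rwa [← hB] at h
  exact (hLyap.submatrix c).add hC
end
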